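/- Let U be a unitary operator on C^2 ⊗ C^2 such that for every unit vector Ψ, UΨ is maximally entangled if and only if Ψ is maximally entangled. Then U maps product states to product states. -/

import Mathlib

open scoped Matrix

noncomputable section

abbrev Qubit := EuclideanSpace ℂ (Fin 2)
abbrev TwoQubit := EuclideanSpace ℂ (Fin 2 × Fin 2)

/-- Elementary tensor (product state) of two qubit vectors. -/
def tp (a b : Qubit) : TwoQubit := WithLp.toLp 2 (fun p : Fin 2 × Fin 2 => a p.1 * b p.2)

/-- Standard basis of `ℂ²`. -/
def e (i : Fin 2) : Qubit := EuclideanSpace.single i 1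

/-- Reduced density matrix of `|Ψ⟩⟨Ψ|` on the first tensor factor. -/
def rho1 (Ψ : TwoQubit) : Matrix (Fin 2) (Fin 2) ℂ :=
  Matrix.of fun i j => ∑ k, Ψ (i, k) * (starRingEnd ℂ) (Ψ (j, k))

/-- Reduced density matrix of `|Ψ⟩⟨Ψ|` on the second tensor factor. -/
def rho2 (Ψ : TwoQubit) : Matrix (Fin 2) (Fin 2) ℂ :=
  Matrix.of fun i j => ∑ k, Ψ (k, i) * (starRingEnd ℂ) (Ψ (k, j))

/-- A maximally entangled state of two qubits: a unit vector both of whose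
reduced density operators equal `(1/2)·1` (equivalently, both Schmidt
coefficients equal `1/2`). -/
def MaxEnt (Ψ : TwoQubit) : Prop :=
  ‖Ψ‖ = 1 ∧ rho1 Ψ = (1 / 2 : ℂ) • 1 ∧ rho2 Ψ = (1 / 2 : ℂ) • 1

/-- A product state: an elementary tensor. -/
def IsProduct (Ψ : TwoQubit) : Prop := ∃ a b : Qubit, Ψ = tp a b

open scoped ComplexConjugate

/-!
A two-qubit state `Ψ` is encoded by its `2 × 2` coefficient matrix `M`: `Ψ` is a product state
iff `det M = 0`, and `Ψ` is maximally entangled iff `M Mᴴ = ½ · 1`, which forces `|det M| = 1/2`.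
For unit `a, b` and `a⊥, b⊥` their conjugate-orthogonal companions, the states
`(a ⊗ b + z a⊥ ⊗ b⊥) / √2` with `|z| = 1` are maximally entangled. Hence, with `x = U (a ⊗ b)` and
`y = U (a⊥ ⊗ b⊥)`, the quadratic `det M(x + z y) = det M(x) + c z + det M(y) z²` has modulus `1`
on the unit circle. Such a quadratic is `c₂ z²`, `c₁ z` or a unimodular constant, and
`|det M(x)| ≤ ‖x‖² / 2 = 1/2` rules out the last case, so `det M(x) = 0`.
-/

open Polynomial in
theorem Polynomial.eq_zero_of_eval_eq_zero_of_norm_eq_one (p : ℂ[X])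
    (h : ∀ z : ℂ, ‖z‖ = 1 → p.eval z = 0) : p = 0 := by
  refine p.eq_zero_of_infinite_isRoot (Set.Infinite.mono (s := Metric.sphere 0 1)
    (fun z hz => h z (by simpa using hz)) ?_)
  exact (isPreconnected_sphere (by simp) (0 : ℂ) 1).infinite_of_nontrivial
    ⟨1, by simp, -1, by simp, by norm_num⟩

open Polynomial in
lemma eq_zero_of_norm_quadratic_eq_one_of_norm_lt_one {c₀ c₁ c₂ : ℂ} (hc₀ : ‖c₀‖ < 1)
    (h : ∀ z : ℂ, ‖z‖ = 1 → ‖c₀ + c₁ * z + c₂ * z ^ 2‖ = 1) : c₀ = 0 := by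
  -- `P(z) = z² (|c₀ + c₁ z + c₂ z²|² - 1)` for `|z| = 1`, where `conj z = z⁻¹`.
  set P : ℂ[X] := C (c₀ * conj c₂) + C (c₀ * conj c₁ + c₁ * conj c₂) * X
    + C (c₀ * conj c₀ + c₁ * conj c₁ + c₂ * conj c₂ - 1) * X ^ 2
    + C (c₁ * conj c₀ + c₂ * conj c₁) * X ^ 3 + C (c₂ * conj c₀) * X ^ 4 with hP
  have hP0 : P = 0 := by
    refine P.eq_zero_of_eval_eq_zero_of_norm_eq_one fun z hz => ?_
    have hzz : z * conj z = 1 := by rw [Complex.mul_conj', hz]; norm_num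
    have hpz : (c₀ + c₁ * z + c₂ * z ^ 2) * conj (c₀ + c₁ * z + c₂ * z ^ 2) = 1 := by
      rw [Complex.mul_conj', h z hz]; norm_num
    simp only [hP, eval_add, eval_mul, eval_C, eval_X, eval_pow, map_add, map_mul, map_pow]
      at hpz ⊢
    linear_combination z ^ 2 * hpz
      - (c₀ + c₁ * z + c₂ * z ^ 2) * (conj c₁ * z + conj c₂ * (z * conj z + 1)) * hzz
  have coeff_eq_zero (k : ℕ) : P.coeff k = 0 := by rw [hP0, coeff_zero]
  have h0 := coeff_eq_zero 0
  have h1 := coeff_eq_zero 1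
  have h2 := coeff_eq_zero 2
  simp only [hP, coeff_add, coeff_C_mul, coeff_C, coeff_X, coeff_X_pow] at h0 h1 h2
  norm_num at h0 h1 h2
  by_contra hne
  have hc₂ : c₂ = 0 := h0.resolve_left hne
  have hc₁ : c₁ = 0 := by simpa [hc₂, hne] using h1
  have hnorm : ‖c₀‖ ^ 2 = 1 := by
    rw [hc₁, hc₂, Complex.mul_conj'] at h2
    have : ((‖c₀‖ ^ 2 : ℝ) : ℂ) = 1 := by push_cast; linear_combination h2
    exact_mod_cast this
  nlinarith [norm_nonneg c₀]

lemma Matrix.norm_toEuclideanLin_of_mem_unitaryGroup {𝕜 n : Type*} [RCLike 𝕜] [Fintype n]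
    [DecidableEq n] {U : Matrix n n 𝕜} (hU : U ∈ Matrix.unitaryGroup n 𝕜)
    (v : EuclideanSpace 𝕜 n) : ‖Matrix.toEuclideanLin U v‖ = ‖v‖ := by
  have hU' : Matrix.toEuclideanCLM (𝕜 := 𝕜) (n := n) U ∈ unitary _ := Unitary.map_mem _ hU
  exact ContinuousLinearMap.norm_map_of_mem_unitary hU' v

lemma exists_norm_eq_one_and_eq_norm_smul {𝕜 E : Type*} [RCLike 𝕜] [NormedAddCommGroup E]
    [NormedSpace 𝕜 E] [Nontrivial E] (x : E) : ∃ u : E, ‖u‖ = 1 ∧ x = (‖x‖ : 𝕜) • u := by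
  by_cases hx : x = 0
  · obtain ⟨y, hy⟩ := exists_ne (0 : E)
    exact ⟨(‖y‖⁻¹ : 𝕜) • y, norm_smul_inv_norm hy, by simp [hx]⟩
  · refine ⟨(‖x‖⁻¹ : 𝕜) • x, norm_smul_inv_norm hx, ?_⟩
    rw [smul_smul, mul_inv_cancel₀ (by simpa using hx), one_smul]

namespace Qubit

def conjPerp (a : Qubit) : Qubit := !₂[-conj (a 1), conj (a 0)]

lemma mul_conj_add_mul_conj_eq_one {a : Qubit} (ha : ‖a‖ = 1) :
    a 0 * conj (a 0) + a 1 * conj (a 1) = 1 := by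
  have hsq := EuclideanSpace.norm_sq_eq a
  rw [ha, one_pow, Fin.sum_univ_two] at hsq
  have hsq' : ((‖a 0‖ ^ 2 + ‖a 1‖ ^ 2 : ℝ) : ℂ) = 1 := by rw [← hsq]; norm_num
  simpa [Complex.mul_conj'] using hsq'

end Qubit

lemma tp_smul_smul (c d : ℂ) (a b : Qubit) : tp (c • a) (d • b) = (c * d) • tp a b := by
  ext p
  simp only [tp, PiLp.toLp_apply, PiLp.smul_apply, smul_eq_mul]
  ring

lemma norm_tp (a b : Qubit) : ‖tp a b‖ = ‖a‖ * ‖b‖ := by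
  have hsq : ‖tp a b‖ ^ 2 = (‖a‖ * ‖b‖) ^ 2 := by
    simp only [mul_pow, EuclideanSpace.norm_sq_eq, tp, norm_mul, Fintype.sum_prod_type,
      Finset.sum_mul_sum]
  exact (pow_left_inj₀ (norm_nonneg _) (by positivity) two_ne_zero).mp hsq

namespace TwoQubit

open Qubit

def coeffMatrix (Ψ : TwoQubit) : Matrix (Fin 2) (Fin 2) ℂ := Matrix.of fun i j => Ψ (i, j)

lemma coeffMatrix_smul (c : ℂ) (Ψ : TwoQubit) : coeffMatrix (c • Ψ) = c • coeffMatrix Ψ := rfl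

lemma rho1_eq_coeffMatrix_mul_conjTranspose (Ψ : TwoQubit) :
    rho1 Ψ = coeffMatrix Ψ * (coeffMatrix Ψ)ᴴ := by
  ext i j
  simp [rho1, coeffMatrix, Matrix.mul_apply]

lemma rho2_eq_transpose_conjTranspose_mul_coeffMatrix (Ψ : TwoQubit) :
    rho2 Ψ = ((coeffMatrix Ψ)ᴴ * coeffMatrix Ψ)ᵀ := by
  ext i j
  simp [rho2, coeffMatrix, Matrix.mul_apply, mul_comm]

lemma trace_rho1 (Ψ : TwoQubit) : (rho1 Ψ).trace = ((‖Ψ‖ ^ 2 : ℝ) : ℂ) := by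
  simp [rho1, Matrix.trace, EuclideanSpace.norm_sq_eq, Fintype.sum_prod_type, Complex.mul_conj']

lemma maxEnt_of_rho1_eq {Ψ : TwoQubit} (h : rho1 Ψ = (1 / 2 : ℂ) • 1) : MaxEnt Ψ := by
  have hnorm : ‖Ψ‖ ^ 2 = 1 := by
    have htrace := trace_rho1 Ψ
    rw [h] at htrace
    norm_num at htrace
    exact_mod_cast htrace.symm
  refine ⟨(pow_eq_one_iff_of_nonneg (norm_nonneg Ψ) two_ne_zero).mp hnorm, h, ?_⟩
  rw [rho1_eq_coeffMatrix_mul_conjTranspose] at h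
  have hleft : coeffMatrix Ψ * ((2 : ℂ) • (coeffMatrix Ψ)ᴴ) = 1 := by
    rw [Matrix.mul_smul, h, smul_smul]; norm_num
  have hright : (coeffMatrix Ψ)ᴴ * coeffMatrix Ψ = (1 / 2 : ℂ) • 1 := by
    calc (coeffMatrix Ψ)ᴴ * coeffMatrix Ψ
        = (1 / 2 : ℂ) • ((2 : ℂ) • (coeffMatrix Ψ)ᴴ * coeffMatrix Ψ) := by
          rw [Matrix.smul_mul, smul_smul]; norm_num
      _ = (1 / 2 : ℂ) • 1 := by rw [mul_eq_one_comm.mp hleft]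
  rw [rho2_eq_transpose_conjTranspose_mul_coeffMatrix, hright, Matrix.transpose_smul,
    Matrix.transpose_one]

lemma norm_det_coeffMatrix_of_rho1_eq {Ψ : TwoQubit} (h : rho1 Ψ = (1 / 2 : ℂ) • 1) :
    ‖(coeffMatrix Ψ).det‖ = 1 / 2 := by
  have hdet := congrArg Matrix.det h
  rw [rho1_eq_coeffMatrix_mul_conjTranspose, Matrix.det_mul, Matrix.det_conjTranspose,
    Matrix.det_smul, Matrix.det_one, RCLike.star_def, Complex.mul_conj'] at hdet
  norm_num at hdet
  have hsq : ‖(coeffMatrix Ψ).det‖ ^ 2 = (1 / 2) ^ 2 := by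
    exact_mod_cast hdet.trans (by norm_num : (1 / 4 : ℂ) = ((1 / 2 : ℝ) : ℂ) ^ 2)
  exact (pow_left_inj₀ (norm_nonneg _) (by norm_num) two_ne_zero).mp hsq

lemma norm_det_coeffMatrix_le (Ψ : TwoQubit) : ‖(coeffMatrix Ψ).det‖ ≤ ‖Ψ‖ ^ 2 / 2 := by
  rw [Matrix.det_fin_two, EuclideanSpace.norm_sq_eq]
  simp only [coeffMatrix, Matrix.of_apply, Fintype.sum_prod_type, Fin.sum_univ_two]
  calc _ ≤ ‖Ψ (0, 0)‖ * ‖Ψ (1, 1)‖ + ‖Ψ (0, 1)‖ * ‖Ψ (1, 0)‖ := by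
        simpa only [norm_mul] using norm_sub_le (Ψ (0, 0) * Ψ (1, 1)) (Ψ (0, 1) * Ψ (1, 0))
    _ ≤ _ := by
        nlinarith [two_mul_le_add_sq ‖Ψ (0, 0)‖ ‖Ψ (1, 1)‖, two_mul_le_add_sq ‖Ψ (0, 1)‖ ‖Ψ (1, 0)‖]

lemma exists_det_coeffMatrix_add_smul (x y : TwoQubit) : ∃ c : ℂ, ∀ z : ℂ,
    (coeffMatrix (x + z • y)).det = (coeffMatrix x).det + c * z + (coeffMatrix y).det * z ^ 2 := by
  refine ⟨x (0, 0) * y (1, 1) + x (1, 1) * y (0, 0) - x (0, 1) * y (1, 0) - x (1, 0) * y (0, 1),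
    fun z => ?_⟩
  simp only [Matrix.det_fin_two, coeffMatrix, Matrix.of_apply, PiLp.add_apply, PiLp.smul_apply,
    smul_eq_mul]
  ring

lemma isProduct_of_det_coeffMatrix_eq_zero {Ψ : TwoQubit} (h : (coeffMatrix Ψ).det = 0) :
    IsProduct Ψ := by
  simp only [Matrix.det_fin_two, coeffMatrix, Matrix.of_apply] at h
  suffices ∃ a b : Qubit, ∀ i j, Ψ (i, j) = a i * b j by
    obtain ⟨a, b, hab⟩ := this
    exact ⟨a, b, by ext ⟨i, j⟩; exact hab i j⟩
  by_cases h00 : Ψ (0, 0) = 0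
  · by_cases h01 : Ψ (0, 1) = 0
    · refine ⟨e 1, !₂[Ψ (1, 0), Ψ (1, 1)], fun i j => ?_⟩
      fin_cases i <;> fin_cases j <;> simp [e, h00, h01]
    · refine ⟨!₂[1, Ψ (1, 1) / Ψ (0, 1)], !₂[Ψ (0, 0), Ψ (0, 1)], fun i j => ?_⟩
      fin_cases i <;> fin_cases j <;>
        simp only [h00, Matrix.cons_val_zero, Matrix.cons_val_one, Matrix.cons_val_fin_one,
          Fin.isValue, Fin.zero_eta, Fin.mk_one, one_mul, mul_zero]
      · simpa [h00, h01] using h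
      · field_simp
  · refine ⟨!₂[1, Ψ (1, 0) / Ψ (0, 0)], !₂[Ψ (0, 0), Ψ (0, 1)], fun i j => ?_⟩
    fin_cases i <;> fin_cases j <;>
      simp only [Matrix.cons_val_zero, Matrix.cons_val_one, Matrix.cons_val_fin_one, Fin.isValue,
        Fin.zero_eta, Fin.mk_one, one_mul] <;> field_simp
    linear_combination h

lemma maxEnt_smul_tp_add_smul_tp_conjPerp {a b : Qubit} (ha : ‖a‖ = 1) (hb : ‖b‖ = 1) {s z : ℂ}
    (hs : ‖s‖ ^ 2 = 1 / 2) (hz : ‖z‖ = 1) :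
    MaxEnt (s • (tp a b + z • tp (conjPerp a) (conjPerp b))) := by
  have ha := mul_conj_add_mul_conj_eq_one ha
  have hb := mul_conj_add_mul_conj_eq_one hb
  have hs : s * conj s = 1 / 2 := by rw [Complex.mul_conj', ← Complex.ofReal_pow, hs]; norm_num
  have hz : z * conj z = 1 := by rw [Complex.mul_conj', hz]; norm_num
  apply maxEnt_of_rho1_eq
  ext i j
  fin_cases i <;> fin_cases j <;>
    simp only [rho1, tp, conjPerp, Matrix.of_apply, Fin.sum_univ_two, PiLp.smul_apply,
      PiLp.add_apply, PiLp.toLp_apply, smul_eq_mul, map_add, map_mul, map_neg, Complex.conj_conj,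
      Matrix.smul_apply, Matrix.one_apply_eq, Matrix.one_apply_ne, ne_eq, zero_ne_one, one_ne_zero,
      not_false_eq_true, Matrix.cons_val_zero, Matrix.cons_val_one, Matrix.cons_val_fin_one,
      Fin.isValue, Fin.zero_eta, Fin.mk_one, mul_one, mul_zero]
  · linear_combination s * conj s * (a 0 * conj (a 0) + z * conj z * (a 1 * conj (a 1))) * hb
      + s * conj s * (a 1 * conj (a 1)) * hz + s * conj s * ha + hs
  · linear_combination -s * conj s * (a 0 * conj (a 1)) * (b 0 * conj (b 0) + b 1 * conj (b 1)) * hz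
  · linear_combination -s * conj s * (a 1 * conj (a 0)) * (b 0 * conj (b 0) + b 1 * conj (b 1)) * hz
  · linear_combination s * conj s * (a 1 * conj (a 1) + z * conj z * (a 0 * conj (a 0))) * hb
      + s * conj s * (a 0 * conj (a 0)) * hz + s * conj s * ha + hs

lemma det_coeffMatrix_map_tp_eq_zero {L : TwoQubit →ₗ[ℂ] TwoQubit} (hL : ∀ Ψ, ‖L Ψ‖ ≤ ‖Ψ‖)
    (hme : ∀ Ψ, MaxEnt Ψ → MaxEnt (L Ψ)) {a b : Qubit} (ha : ‖a‖ = 1) (hb : ‖b‖ = 1) :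
    (coeffMatrix (L (tp a b))).det = 0 := by
  set x := L (tp a b)
  set y := L (tp (conjPerp a) (conjPerp b))
  set s : ℂ := (((√2)⁻¹ : ℝ) : ℂ)
  have hs : ‖s‖ ^ 2 = 1 / 2 := by simp [s]
  obtain ⟨c, hc⟩ := exists_det_coeffMatrix_add_smul x y
  refine eq_zero_of_norm_quadratic_eq_one_of_norm_lt_one (c₁ := c) (c₂ := (coeffMatrix y).det) ?_
    fun z hz => ?_
  · calc ‖(coeffMatrix x).det‖ ≤ ‖x‖ ^ 2 / 2 := norm_det_coeffMatrix_le x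
      _ ≤ 1 / 2 := by gcongr; simpa [norm_tp, ha, hb] using hL (tp a b)
      _ < 1 := by norm_num
  · have hent := hme _ (maxEnt_smul_tp_add_smul_tp_conjPerp ha hb hs hz)
    have hdet := norm_det_coeffMatrix_of_rho1_eq hent.2.1
    rw [map_smul, map_add, map_smul, coeffMatrix_smul, Matrix.det_smul, hc, norm_mul, norm_pow,
      Fintype.card_fin, hs] at hdet
    linear_combination 2 * hdet

theorem isProduct_map_of_isProduct {L : TwoQubit →ₗ[ℂ] TwoQubit} (hL : ∀ Ψ, ‖L Ψ‖ ≤ ‖Ψ‖)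
    (hme : ∀ Ψ, MaxEnt Ψ → MaxEnt (L Ψ)) {Ψ : TwoQubit} (hΨ : IsProduct Ψ) :
    IsProduct (L Ψ) := by
  obtain ⟨a, b, rfl⟩ := hΨ
  obtain ⟨a', ha', ha⟩ := exists_norm_eq_one_and_eq_norm_smul (𝕜 := ℂ) a
  obtain ⟨b', hb', hb⟩ := exists_norm_eq_one_and_eq_norm_smul (𝕜 := ℂ) b
  apply isProduct_of_det_coeffMatrix_eq_zero
  rw [ha, hb, tp_smul_smul, map_smul, coeffMatrix_smul, Matrix.det_smul,
    det_coeffMatrix_map_tp_eq_zero hL hme ha' hb', mul_zero]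

end TwoQubit

theorem stmt_8 (U : Matrix (Fin 2 × Fin 2) (Fin 2 × Fin 2) ℂ)
    (hU : U ∈ Matrix.unitaryGroup (Fin 2 × Fin 2) ℂ)
    (hme : ∀ Ψ : TwoQubit, ‖Ψ‖ = 1 →
      (MaxEnt (Matrix.toEuclideanLin U Ψ) ↔ MaxEnt Ψ)) :
    ∀ Ψ : TwoQubit, IsProduct Ψ → IsProduct (Matrix.toEuclideanLin U Ψ) :=
  fun _ => TwoQubit.isProduct_map_of_isProduct
    (fun Ψ => (Matrix.norm_toEuclideanLin_of_mem_unitaryGroup hU Ψ).le)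
    (fun Ψ hΨ => (hme Ψ hΨ.1).mpr hΨ)
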